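/- Let S be a commutative monoid, e ∈ S idempotent, and suppose G = e·S·e is a group with identity e. Let f ∈ S and suppose m is the smallest positive integer with f^n ∈ G for all n ≥ m. Then the set {f, f², ..., f^{m-1}} is disjoint from G, and the elements f, f², ..., f^{m-1} are pairwise distinct. -/
import Mathlib


/-- Let `S` be a commutative monoid, `e` idempotent, and `G = eSe` a group with identity `e`.
If `m` is the smallest positive integer with `f^n ∈ G` for all `n ≥ m`, then
`{f, f², …, f^{m-1}}` is disjoint from `G` and the elements `f, f², …, f^{m-1}` are
pairwise distinct. -/
theorem initial_iterates_distinct_and_outside_group {S : Type*} [CommMonoid S] (e f : S)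
    (he : e * e = e)
    (hgroup : ∀ x ∈ {s : S | ∃ t, s = e * t * e},
      e * x = x ∧ ∃ y ∈ {s : S | ∃ t, s = e * t * e}, x * y = e)
    (m : ℕ) (hm1 : 1 ≤ m)
    (hm : ∀ n, m ≤ n → f ^ n ∈ {s : S | ∃ t, s = e * t * e})
    (hmmin : ∀ m', 1 ≤ m' → (∀ n, m' ≤ n → f ^ n ∈ {s : S | ∃ t, s = e * t * e}) → m ≤ m') :
    (∀ i, 1 ≤ i → i ≤ m - 1 → f ^ i ∉ {s : S | ∃ t, s = e * t * e}) ∧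
    (∀ i j, 1 ≤ i → i < j → j ≤ m - 1 → f ^ i ≠ f ^ j) := by
  have absorb : ∀ x ∈ {s : S | ∃ t, s = e * t * e}, ∀ s : S,
      x * s ∈ {s : S | ∃ t, s = e * t * e} := by
    rintro x ⟨t, rfl⟩ s
    exact ⟨t * s, by ac_rfl⟩
  have part1 : ∀ i, 1 ≤ i → i ≤ m - 1 → f ^ i ∉ {s : S | ∃ t, s = e * t * e} := by
    intro i hi1 hi2 hmem
    have : ∀ n, i ≤ n → f ^ n ∈ {s : S | ∃ t, s = e * t * e} := by
      intro n hn
      have : f ^ n = f ^ i * f ^ (n - i) := by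
        rw [← pow_add]; congr 1; omega
      rw [this]
      exact absorb _ hmem _
    have := hmmin i hi1 this
    omega
  refine ⟨part1, ?_⟩
  intro i j hi hij hj heq
  have key : ∀ k : ℕ, f ^ (i + k * (j - i)) = f ^ i := by
    intro k
    induction k with
    | zero => simp
    | succ k ih =>
      have : i + (k + 1) * (j - i) = (i + k * (j - i)) + (j - i) := by ring
      rw [this, pow_add, ih, ← pow_add]
      have : i + (j - i) = j := by omega
      rw [this, ← heq]
  have hmem : f ^ i ∈ {s : S | ∃ t, s = e * t * e} := by
    rw [← key m]
    exact hm _ (Nat.le_trans (Nat.le_mul_of_pos_right m (by omega)) (Nat.le_add_left _ _))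
  exact part1 i hi (by omega) hmem
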